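/- The set of solutions (z₁, z₂) ∈ ℝ² with z₁ > 0 and z₂ > 0 of the system (35/3)(z₁ − 1)z₁(5z₁ − 9z₂ + 5) = 0 and (35/3)(z₂ − 1)z₂(−9z₁ + 5z₂ + 5) = 0 is exactly {(1, 1), (1, 4/5), (4/5, 1), (5/4, 5/4)}. (These four points are the singularities at infinity of the normalized Ricci flow on the generalized Wallach space E₇/SO(8), corresponding to its four invariant Einstein metrics.) -/
import Mathlib


/-- First polynomial of the compactified normalized Ricci flow at infinity for the
generalized Wallach space E₇/SO(8). -/
noncomputable def u₁ (z₁ z₂ : ℝ) : ℝ :=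
  (35 / 3) * (z₁ - 1) * z₁ * (5 * z₁ - 9 * z₂ + 5)

/-- Second polynomial of the compactified normalized Ricci flow at infinity for the
generalized Wallach space E₇/SO(8). -/
noncomputable def u₂ (z₁ z₂ : ℝ) : ℝ :=
  (35 / 3) * (z₂ - 1) * z₂ * (-9 * z₁ + 5 * z₂ + 5)

theorem wallach_E7_SO8_singularities :
    {p : ℝ × ℝ | 0 < p.1 ∧ 0 < p.2 ∧ u₁ p.1 p.2 = 0 ∧ u₂ p.1 p.2 = 0} =
      {((1 : ℝ), (1 : ℝ)), ((1 : ℝ), (4 : ℝ) / 5), ((4 : ℝ) / 5, (1 : ℝ)),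
        ((5 : ℝ) / 4, (5 : ℝ) / 4)} := by
  ext ⟨x, y⟩
  simp only [Set.mem_setOf_eq, Set.mem_insert_iff, Set.mem_singleton_iff, Prod.mk.injEq, u₁, u₂]
  constructor
  · rintro ⟨hx, hy, h1, h2⟩
    have h1' : (x - 1) * (5 * x - 9 * y + 5) = 0 := by
      rcases mul_eq_zero.mp h1 with h | h
      · rcases mul_eq_zero.mp h with h | h
        · rcases mul_eq_zero.mp h with h | h
          · norm_num at h
          · exact mul_eq_zero_of_left h _
        · exact absurd h hx.ne'
      · exact mul_eq_zero_of_right _ h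
    have h2' : (y - 1) * (-9 * x + 5 * y + 5) = 0 := by
      rcases mul_eq_zero.mp h2 with h | h
      · rcases mul_eq_zero.mp h with h | h
        · rcases mul_eq_zero.mp h with h | h
          · norm_num at h
          · exact mul_eq_zero_of_left h _
        · exact absurd h hy.ne'
      · exact mul_eq_zero_of_right _ h
    rcases mul_eq_zero.mp h1' with ha | ha <;> rcases mul_eq_zero.mp h2' with hb | hb
    · left; constructor <;> linarith
    · right; left; constructor <;> linarith
    · right; right; left; constructor <;> linarith
    · right; right; right; constructor <;> linarith
  · rintro (⟨rfl, rfl⟩ | ⟨rfl, rfl⟩ | ⟨rfl, rfl⟩ | ⟨rfl, rfl⟩) <;> norm_num
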